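/- Let F be a finite field with q = |F| elements and K a finite field extension of F. Let A, B ∈ K[X] be linearized polynomials, not both zero. Then there exist linearized polynomials U, V, G ∈ K[X] such that U ∘ A + V ∘ B = G, G right-divides both A and B, and every linearized polynomial D that right-divides both A and B also right-divides G (i.e., G is a greatest common right divisor of A and B, given by a Bézout relation). -/

import Mathlib

open Polynomial

/-- A polynomial over `K` is linearized (a `q`-polynomial) if every exponent in
its support is a power of `q`. -/
def IsLinearized (q : ℕ) {K : Type*} [Semiring K] (p : K[X]) : Prop :=
  ∀ n ∈ p.support, ∃ i : ℕ, n = q ^ i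

/-- `B` right-divides `A` (among linearized polynomials): `A = Q ∘ B` for some
linearized `Q`. -/
def LinearizedRightDvd (q : ℕ) {K : Type*} [CommSemiring K] (B A : K[X]) : Prop :=
  ∃ Q : K[X], IsLinearized q Q ∧ A = Q.comp B

namespace GcrdAux

variable {K : Type*} [Field K] {q : ℕ}

lemma isLin_zero : IsLinearized q (0 : K[X]) := by simp [IsLinearized]

lemma isLin_X : IsLinearized q (X : K[X]) := by
  intro n hn
  rw [support_X] at hn
  exact ⟨0, by simpa using hn⟩

lemma isLin_add {A B : K[X]} (hA : IsLinearized q A) (hB : IsLinearized q B) :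
    IsLinearized q (A + B) := fun n hn => by
  rcases Finset.mem_union.mp (support_add hn) with h | h
  exacts [hA n h, hB n h]

lemma isLin_neg {A : K[X]} (hA : IsLinearized q A) : IsLinearized q (-A) := fun n hn => by
  rw [support_neg] at hn; exact hA n hn

lemma isLin_sub {A B : K[X]} (hA : IsLinearized q A) (hB : IsLinearized q B) :
    IsLinearized q (A - B) := by
  rw [sub_eq_add_neg]; exact isLin_add hA (isLin_neg hB)

lemma isLin_C_mul {A : K[X]} (c : K) (hA : IsLinearized q A) :
    IsLinearized q (C c * A) := fun n hn => by
  rw [← smul_eq_C_mul] at hn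
  exact hA n (support_smul c A hn)

lemma isLin_monomial (i : ℕ) (c : K) : IsLinearized q (monomial (q ^ i) c) := fun n hn => by
  rw [Finset.mem_singleton.mp (support_monomial' _ _ hn)]
  exact ⟨i, rfl⟩

lemma isLin_sum {ι : Type*} {s : Finset ι} {f : ι → K[X]}
    (h : ∀ i ∈ s, IsLinearized q (f i)) : IsLinearized q (∑ i ∈ s, f i) := by
  classical
  induction s using Finset.induction_on with
  | empty => simpa using (isLin_zero (K := K) (q := q))
  | insert a s hi ih =>
      rw [Finset.sum_insert hi]
      exact isLin_add (h _ (Finset.mem_insert_self _ _))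
        (ih fun i hisub => h i (Finset.mem_insert_of_mem hisub))

end GcrdAux

namespace GcrdAux

variable {K : Type*} [Field K] {q : ℕ}

section Char

variable (p k : ℕ) [Fact p.Prime] [CharP K p]

lemma isLin_pow_q (hq : q = p ^ k) {B : K[X]} (hB : IsLinearized q B) :
    IsLinearized q (B ^ q) := by
  classical
  haveI : ExpChar K[X] p := ExpChar.prime Fact.out
  have h1 : B ^ q = ∑ m ∈ B.support, monomial (m * q) (B.coeff m ^ q) := by
    conv_lhs => rw [B.as_sum_support]
    rw [hq, sum_pow_char_pow]
    exact Finset.sum_congr rfl fun m _ => by rw [← hq, monomial_pow]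
  rw [h1]
  apply isLin_sum
  intro m hm
  obtain ⟨i, rfl⟩ := hB m hm
  have h2 : q ^ i * q = q ^ (i + 1) := (pow_succ q i).symm
  rw [h2]
  exact isLin_monomial _ _

lemma isLin_pow_q_pow (hq : q = p ^ k) {B : K[X]} (hB : IsLinearized q B) (e : ℕ) :
    IsLinearized q (B ^ q ^ e) := by
  induction e with
  | zero => simpa using hB
  | succ e ih =>
      have : B ^ q ^ (e + 1) = (B ^ q ^ e) ^ q := by rw [← pow_mul, pow_succ]
      rw [this]
      exact isLin_pow_q p k hq ih

lemma isLin_comp (hq : q = p ^ k) {P B : K[X]} (hP : IsLinearized q P)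
    (hB : IsLinearized q B) : IsLinearized q (P.comp B) := by
  rw [comp_eq_sum_left, sum_def]
  apply isLin_sum
  intro n hn
  obtain ⟨i, rfl⟩ := hP n hn
  exact isLin_C_mul _ (isLin_pow_q_pow p k hq hB i)

lemma comp_add_right (hq : q = p ^ k) {P : K[X]} (hP : IsLinearized q P) (A B : K[X]) :
    P.comp (A + B) = P.comp A + P.comp B := by
  haveI : ExpChar K[X] p := ExpChar.prime Fact.out
  rw [comp_eq_sum_left, comp_eq_sum_left, comp_eq_sum_left, sum_def, sum_def, sum_def,
    ← Finset.sum_add_distrib]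
  apply Finset.sum_congr rfl
  intro n hn
  obtain ⟨i, rfl⟩ := hP n hn
  subst hq
  rw [← pow_mul, add_pow_char_pow, mul_add, pow_mul]

lemma comp_sub_right (hq : q = p ^ k) {P : K[X]} (hP : IsLinearized q P) (A B : K[X]) :
    P.comp (A - B) = P.comp A - P.comp B := by
  have h := comp_add_right p k hq hP (A - B) B
  rw [sub_add_cancel] at h
  exact eq_sub_of_add_eq h.symm

lemma divmod (hq : q = p ^ k) (hq2 : 1 < q) (B : K[X]) (hB : IsLinearized q B)
    (hB0 : B ≠ 0) : ∀ A : K[X], IsLinearized q A →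
    ∃ Q R : K[X], IsLinearized q Q ∧ IsLinearized q R ∧ A = Q.comp B + R ∧
      R.degree < B.degree := by
  intro A hA
  generalize hd : A.natDegree = d
  induction d using Nat.strong_induction_on generalizing A with
  | _ d ih =>
  by_cases hlt : A.degree < B.degree
  · exact ⟨0, A, isLin_zero, hA, by rw [zero_comp, zero_add], hlt⟩
  push_neg at hlt
  have hA0 : A ≠ 0 := by
    rintro rfl
    exact hB0 (degree_eq_bot.mp (le_bot_iff.mp (by simpa using hlt)))
  obtain ⟨n, hn⟩ := hA _ (natDegree_mem_support_of_nonzero hA0)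
  obtain ⟨m, hm⟩ := hB _ (natDegree_mem_support_of_nonzero hB0)
  have hmn : m ≤ n := by
    have h3 : q ^ m ≤ q ^ n := by
      rw [← hm, ← hn]; exact natDegree_le_natDegree hlt
    exact (Nat.pow_le_pow_iff_right hq2).mp h3
  set e := n - m with he
  set c := A.leadingCoeff / (B.leadingCoeff ^ q ^ e) with hc
  have hbne : B.leadingCoeff ^ q ^ e ≠ 0 := pow_ne_zero _ (leadingCoeff_ne_zero.mpr hB0)
  have hcne : c ≠ 0 := div_ne_zero (leadingCoeff_ne_zero.mpr hA0) hbne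
  set P0 : K[X] := C c * X ^ (q ^ e) with hP0
  have hP0lin : IsLinearized q P0 := by
    rw [hP0, C_mul_X_pow_eq_monomial]
    exact isLin_monomial _ _
  have hcomp : P0.comp B = C c * B ^ (q ^ e) := by
    rw [hP0, mul_comp, C_comp, X_pow_comp]
  have hBq0 : C c * B ^ q ^ e ≠ 0 := mul_ne_zero (C_ne_zero.mpr hcne) (pow_ne_zero _ hB0)
  have hdeq : (C c * B ^ q ^ e).degree = A.degree := by
    rw [degree_eq_natDegree hBq0, degree_eq_natDegree hA0]
    congr 1
    rw [natDegree_C_mul hcne, natDegree_pow, hm, hn, ← pow_add, Nat.sub_add_cancel hmn]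
  have hlc : (C c * B ^ q ^ e).leadingCoeff = A.leadingCoeff := by
    rw [leadingCoeff_mul, leadingCoeff_C, leadingCoeff_pow, hc, div_mul_cancel₀ _ hbne]
  set A' := A - P0.comp B with hA'
  have hA'lin : IsLinearized q A' := isLin_sub hA (isLin_comp p k hq hP0lin hB)
  have hdlt : A'.degree < A.degree := by
    rw [hA', hcomp]
    exact degree_sub_lt hdeq.symm hA0 hlc.symm
  by_cases hA'0 : A' = 0
  · refine ⟨P0, 0, hP0lin, isLin_zero, ?_, ?_⟩
    · rw [add_zero, ← sub_eq_zero, ← hA', hA'0]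
    · rw [degree_zero]
      exact Ne.bot_lt fun hbot => hB0 (degree_eq_bot.mp hbot)
  · have hndlt : A'.natDegree < d := hd ▸ natDegree_lt_natDegree hA'0 hdlt
    obtain ⟨Q', R, hQ'lin, hRlin, hEq, hRdeg⟩ := ih _ hndlt A' hA'lin rfl
    refine ⟨P0 + Q', R, isLin_add hP0lin hQ'lin, hRlin, ?_, hRdeg⟩
    have h4 : A = P0.comp B + A' := by rw [hA']; ring
    rw [add_comp, h4, hEq]; ring

lemma gcrd (hq : q = p ^ k) (hq2 : 1 < q) :
    ∀ B : K[X], IsLinearized q B → ∀ A : K[X], IsLinearized q A →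
    ∃ U V G : K[X], IsLinearized q U ∧ IsLinearized q V ∧ IsLinearized q G ∧
      U.comp A + V.comp B = G ∧ LinearizedRightDvd q G A ∧ LinearizedRightDvd q G B ∧
      ∀ D : K[X], IsLinearized q D → LinearizedRightDvd q D A → LinearizedRightDvd q D B →
        LinearizedRightDvd q D G := by
  intro B hB
  generalize hd : B.natDegree = d
  induction d using Nat.strong_induction_on generalizing B with
  | _ d ih =>
  intro A hA
  by_cases hB0 : B = 0
  · subst hB0
    exact ⟨X, 0, A, isLin_X, isLin_zero, hA, by rw [X_comp, zero_comp, add_zero],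
      ⟨X, isLin_X, X_comp.symm⟩, ⟨0, isLin_zero, zero_comp.symm⟩,
      fun D _ hDA _ => hDA⟩
  · obtain ⟨Q, R, hQlin, hRlin, hEq, hRdeg⟩ := divmod p k hq hq2 B hB hB0 A hA
    have hB1 : 1 ≤ B.natDegree := by
      obtain ⟨m, hm⟩ := hB _ (natDegree_mem_support_of_nonzero hB0)
      rw [hm]
      exact Nat.one_le_pow _ _ (by omega)
    have hnd : R.natDegree < d := by
      subst hd
      by_cases hR0 : R = 0
      · rw [hR0, natDegree_zero]; omega
      · exact natDegree_lt_natDegree hR0 hRdeg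
    obtain ⟨U', V', G, hU', hV', hG, hBez, hGB, hGR, huniv⟩ := ih _ hnd R hRlin rfl B hB
    refine ⟨V', U' - V'.comp Q, G, hV', isLin_sub hU' (isLin_comp p k hq hV' hQlin), hG,
      ?_, ?_, hGB, ?_⟩
    · have h1 : V'.comp R = V'.comp A - V'.comp (Q.comp B) := by
        rw [← comp_sub_right p k hq hV']
        congr 1
        rw [hEq]; ring
      rw [← hBez, h1, sub_comp, comp_assoc]
      ring
    · obtain ⟨S, hSlin, hSB⟩ := hGB
      obtain ⟨T, hTlin, hTR⟩ := hGR
      refine ⟨Q.comp S + T, isLin_add (isLin_comp p k hq hQlin hSlin) hTlin, ?_⟩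
      rw [hEq, hSB, hTR, add_comp, comp_assoc]
    · intro D hD hDA hDB
      obtain ⟨P1, hP1, hP1e⟩ := hDA
      obtain ⟨S1, hS1, hS1e⟩ := hDB
      have hDR : LinearizedRightDvd q D R := by
        refine ⟨P1 - Q.comp S1, isLin_sub hP1 (isLin_comp p k hq hQlin hS1), ?_⟩
        rw [sub_comp, comp_assoc, ← hP1e, ← hS1e, hEq]
        ring
      exact huniv D hD ⟨S1, hS1, hS1e⟩ hDR

end Char

end GcrdAux

/-- Existence of a greatest common right divisor of two linearized polynomials,
given by a Bézout relation. -/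
theorem exists_gcrd_bezout (F K : Type*) [Field F] [Fintype F]
    [Field K] [Fintype K] [Algebra F K]
    (q : ℕ) (hq : q = Fintype.card F)
    (A B : K[X]) (hA : IsLinearized q A) (hB : IsLinearized q B)
    (hAB : ¬(A = 0 ∧ B = 0)) :
    ∃ U V G : K[X], IsLinearized q U ∧ IsLinearized q V ∧ IsLinearized q G ∧
      U.comp A + V.comp B = G ∧
      LinearizedRightDvd q G A ∧ LinearizedRightDvd q G B ∧
      ∀ D : K[X], IsLinearized q D → LinearizedRightDvd q D A → LinearizedRightDvd q D B →
        LinearizedRightDvd q D G := by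
  haveI : Fact (ringChar F).Prime := ⟨CharP.char_is_prime F (ringChar F)⟩
  haveI : CharP K (ringChar F) :=
    charP_of_injective_algebraMap (algebraMap F K).injective (ringChar F)
  obtain ⟨n, _, hcard⟩ := FiniteField.card F (ringChar F)
  have hq' : q = ringChar F ^ (n : ℕ) := by rw [hq, hcard]
  have hq2 : 1 < q := by rw [hq]; exact Fintype.one_lt_card
  exact GcrdAux.gcrd (ringChar F) n hq' hq2 B hB A hA
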